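/- Let (A₁, (f₁,g₁)) and (A₂, (f₂,g₂)) be dibaric algebras with spaces of invariant linear forms J₁ = J_{f₁} and J₂ = J_{f₂}, and let h : A₁ → A₂ be a dibaric algebra homomorphism. If h is surjective and ker h ⊆ J₁^⊥, then the pullback h* (given by h*F = F ∘ h) maps J₂ bijectively onto J₁. -/

import Mathlib

/-! The pullback `F ↦ F ∘ h` preserves invariance because `h` is multiplicative and `f₂ ∘ h = f₁`;
it is injective because `h` is surjective. An invariant form `G` on `A₁` kills `ker h`, so it factors
as `F ∘ h`, and `F` is again invariant since every product in `A₂` lifts to a product in `A₁`. -/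

theorem LinearMap.exists_comp_eq_of_ker_le {R M M' : Type*} [CommRing R] [AddCommGroup M]
    [Module R M] [AddCommGroup M'] [Module R M'] {h : M →ₗ[R] M'} (hsurj : Function.Surjective h)
    {G : M →ₗ[R] R} (hG : LinearMap.ker h ≤ LinearMap.ker G) : ∃ F : M' →ₗ[R] R, F.comp h = G := by
  have hG' : G ∈ (LinearMap.ker h).dualAnnihilator :=
    (Submodule.mem_dualAnnihilator G).2 fun _ hz => hG hz
  rwa [← h.range_dualMap_eq_dualAnnihilator_ker_of_surjective hsurj] at hG'

section InvariantForms

variable {K A₁ A₂ : Type*} [Field K] [AddCommGroup A₁] [Module K A₁] [AddCommGroup A₂] [Module K A₂]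

def IsInvariantForm {A : Type*} [AddCommGroup A] [Module K A]
    (mul : A →ₗ[K] A →ₗ[K] A) (f F : A →ₗ[K] K) : Prop :=
  ∀ a b : A, F (mul a b) = (f a * F b + f b * F a) / 2

variable {mul₁ : A₁ →ₗ[K] A₁ →ₗ[K] A₁} {mul₂ : A₂ →ₗ[K] A₂ →ₗ[K] A₂} {f₁ : A₁ →ₗ[K] K}
  {f₂ F₂ : A₂ →ₗ[K] K} {h : A₁ →ₗ[K] A₂}

theorem IsInvariantForm.comp (hhom : ∀ x y, h (mul₁ x y) = mul₂ (h x) (h y))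
    (hf : ∀ x, f₂ (h x) = f₁ x) (hF : IsInvariantForm mul₂ f₂ F₂) :
    IsInvariantForm mul₁ f₁ (F₂.comp h) := by
  intro a b
  simp only [LinearMap.comp_apply, hhom, hF (h a) (h b), hf]

theorem IsInvariantForm.of_comp (hhom : ∀ x y, h (mul₁ x y) = mul₂ (h x) (h y))
    (hf : ∀ x, f₂ (h x) = f₁ x) (hsurj : Function.Surjective h)
    (hF : IsInvariantForm mul₁ f₁ (F₂.comp h)) : IsInvariantForm mul₂ f₂ F₂ := by
  intro a b
  obtain ⟨x, rfl⟩ := hsurj a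
  obtain ⟨y, rfl⟩ := hsurj b
  simpa only [LinearMap.comp_apply, hhom, hf] using hF x y

end InvariantForms

theorem stmt_14_general (A₁ A₂ : Type*) [AddCommGroup A₁] [Module ℝ A₁]
    [AddCommGroup A₂] [Module ℝ A₂]
    (mul₁ : A₁ →ₗ[ℝ] A₁ →ₗ[ℝ] A₁) (mul₂ : A₂ →ₗ[ℝ] A₂ →ₗ[ℝ] A₂)
    (f₁ : A₁ →ₗ[ℝ] ℝ)
    (f₂ : A₂ →ₗ[ℝ] ℝ)
    (h : A₁ →ₗ[ℝ] A₂)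
    (hhom : ∀ x y : A₁, h (mul₁ x y) = mul₂ (h x) (h y))
    (hdib : ∀ x : A₁, f₂ (h x) = f₁ x)
    (hsurj : Function.Surjective h)
    (hker : ∀ z : A₁, h z = 0 →
      ∀ F : A₁ →ₗ[ℝ] ℝ,
        (∀ a b : A₁, F (mul₁ a b) = (f₁ a * F b + f₁ b * F a) / 2) → F z = 0) :
    (∀ F : A₂ →ₗ[ℝ] ℝ,
      (∀ a b : A₂, F (mul₂ a b) = (f₂ a * F b + f₂ b * F a) / 2) →
      (∀ a b : A₁, (F.comp h) (mul₁ a b) =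
        (f₁ a * (F.comp h) b + f₁ b * (F.comp h) a) / 2)) ∧
    (∀ F G : A₂ →ₗ[ℝ] ℝ,
      (∀ a b : A₂, F (mul₂ a b) = (f₂ a * F b + f₂ b * F a) / 2) →
      (∀ a b : A₂, G (mul₂ a b) = (f₂ a * G b + f₂ b * G a) / 2) →
      F.comp h = G.comp h → F = G) ∧
    (∀ G : A₁ →ₗ[ℝ] ℝ,
      (∀ a b : A₁, G (mul₁ a b) = (f₁ a * G b + f₁ b * G a) / 2) →
      ∃ F : A₂ →ₗ[ℝ] ℝ,
        (∀ a b : A₂, F (mul₂ a b) = (f₂ a * F b + f₂ b * F a) / 2) ∧ F.comp h = G) := by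
  refine ⟨fun _ => IsInvariantForm.comp hhom hdib, fun F G _ _ => (LinearMap.cancel_right hsurj).1, ?_⟩
  intro G hG
  obtain ⟨F, hFG⟩ := LinearMap.exists_comp_eq_of_ker_le hsurj fun z hz => hker z hz G hG
  refine ⟨F, IsInvariantForm.of_comp hhom hdib hsurj ?_, hFG⟩
  rwa [hFG]

/-- Let (A₁, (f₁,g₁)) and (A₂, (f₂,g₂)) be dibaric algebras and h : A₁ → A₂ a dibaric algebra
homomorphism. If h is surjective and ker h ⊆ J₁^⊥, then the pullback h* (F ↦ F ∘ h) maps J₂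
bijectively onto J₁. -/
theorem stmt_14 (A₁ A₂ : Type*) [AddCommGroup A₁] [Module ℝ A₁]
    [AddCommGroup A₂] [Module ℝ A₂]
    (mul₁ : A₁ →ₗ[ℝ] A₁ →ₗ[ℝ] A₁) (mul₂ : A₂ →ₗ[ℝ] A₂ →ₗ[ℝ] A₂)
    (hcomm₁ : ∀ x y : A₁, mul₁ x y = mul₁ y x)
    (hcomm₂ : ∀ x y : A₂, mul₂ x y = mul₂ y x)
    (f₁ g₁ : A₁ →ₗ[ℝ] ℝ) (hf₁ : f₁ ≠ 0) (hg₁ : g₁ ≠ 0)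
    (hbq₁ : ∀ x y : A₁, f₁ (mul₁ x y) = (f₁ x * g₁ y + f₁ y * g₁ x) / 2 ∧
                        g₁ (mul₁ x y) = (f₁ x * g₁ y + f₁ y * g₁ x) / 2)
    (f₂ g₂ : A₂ →ₗ[ℝ] ℝ) (hf₂ : f₂ ≠ 0) (hg₂ : g₂ ≠ 0)
    (hbq₂ : ∀ x y : A₂, f₂ (mul₂ x y) = (f₂ x * g₂ y + f₂ y * g₂ x) / 2 ∧
                        g₂ (mul₂ x y) = (f₂ x * g₂ y + f₂ y * g₂ x) / 2)
    (h : A₁ →ₗ[ℝ] A₂)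
    (hhom : ∀ x y : A₁, h (mul₁ x y) = mul₂ (h x) (h y))
    (hdib : ∀ x : A₁, f₂ (h x) = f₁ x)
    (hsurj : Function.Surjective h)
    (hker : ∀ z : A₁, h z = 0 →
      ∀ F : A₁ →ₗ[ℝ] ℝ,
        (∀ a b : A₁, F (mul₁ a b) = (f₁ a * F b + f₁ b * F a) / 2) → F z = 0) :
    (∀ F : A₂ →ₗ[ℝ] ℝ,
      (∀ a b : A₂, F (mul₂ a b) = (f₂ a * F b + f₂ b * F a) / 2) →
      (∀ a b : A₁, (F.comp h) (mul₁ a b) =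
        (f₁ a * (F.comp h) b + f₁ b * (F.comp h) a) / 2)) ∧
    (∀ F G : A₂ →ₗ[ℝ] ℝ,
      (∀ a b : A₂, F (mul₂ a b) = (f₂ a * F b + f₂ b * F a) / 2) →
      (∀ a b : A₂, G (mul₂ a b) = (f₂ a * G b + f₂ b * G a) / 2) →
      F.comp h = G.comp h → F = G) ∧
    (∀ G : A₁ →ₗ[ℝ] ℝ,
      (∀ a b : A₁, G (mul₁ a b) = (f₁ a * G b + f₁ b * G a) / 2) →
      ∃ F : A₂ →ₗ[ℝ] ℝ,
        (∀ a b : A₂, F (mul₂ a b) = (f₂ a * F b + f₂ b * F a) / 2) ∧ F.comp h = G) :=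
  stmt_14_general A₁ A₂ mul₁ mul₂ f₁ f₂ h hhom hdib hsurj hker
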